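/- arXiv:1709.01242 — 6 statements merged into one kernel-verified Lean document; each statement's English description precedes it below -/
import Mathlib

section
/- Let K = diag(J,…,J) be the 2n×2n block-diagonal matrix with J = [[0,1],[-1,0]] on the diagonal. Then the Hessian D²H(z) of the n-vortex Hamiltonian anti-commutes with K: D²H(z)·K = -K·D²H(z). -/
open Finset

/-- Off-diagonal `2×2` block `A_{ij}` of the Hessian `D²H(z)` of the `n`-vortex
Hamiltonian: `A_{ij} = (ΓᵢΓⱼ/r_{ij}⁴) [[a_{ij}, b_{ij}], [b_{ij}, -a_{ij}]]` where
`a_{ij} = (yᵢ-yⱼ)² - (xᵢ-xⱼ)²` and `b_{ij} = -2(xᵢ-xⱼ)(yᵢ-yⱼ)`. -/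
noncomputable def hessBlock (n : ℕ) (Γ x y : Fin n → ℝ) (i j : Fin n) :
    Matrix (Fin 2) (Fin 2) ℝ :=
  let a := (y i - y j) ^ 2 - (x i - x j) ^ 2
  let b := -2 * (x i - x j) * (y i - y j)
  let r2 := (x i - x j) ^ 2 + (y i - y j) ^ 2
  (Γ i * Γ j / r2 ^ 2) • !![a, b; b, -a]

/-- The Hessian `D²H(z)` of the `n`-vortex Hamiltonian, with off-diagonal blocks
`A_{ij}` and diagonal blocks `A_{ii} = -∑_{j≠i} A_{ij}`. -/
noncomputable def hessH (n : ℕ) (Γ x y : Fin n → ℝ) :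
    Matrix (Fin n × Fin 2) (Fin n × Fin 2) ℝ :=
  fun p q =>
    if p.1 = q.1 then
      (-(∑ k ∈ Finset.univ.filter (fun k => k ≠ p.1), hessBlock n Γ x y p.1 k)) p.2 q.2
    else hessBlock n Γ x y p.1 q.1 p.2 q.2

/-- `K = diag(J, …, J)`, the `2n×2n` block-diagonal matrix with `J = [[0,1],[-1,0]]`
on the diagonal. -/
def Kmat (n : ℕ) : Matrix (Fin n × Fin 2) (Fin n × Fin 2) ℝ :=
  fun p q => if p.1 = q.1 then !![0, 1; -1, 0] p.2 q.2 else 0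

lemma hessBlock00 (n : ℕ) (Γ x y : Fin n → ℝ) (i j : Fin n) :
    hessBlock n Γ x y i j 0 0 = -(hessBlock n Γ x y i j 1 1) := by
  simp [hessBlock]; try ring

lemma hessBlock01 (n : ℕ) (Γ x y : Fin n → ℝ) (i j : Fin n) :
    hessBlock n Γ x y i j 0 1 = hessBlock n Γ x y i j 1 0 := by
  simp [hessBlock]; try ring

lemma hessH00 (n : ℕ) (Γ x y : Fin n → ℝ) (i j : Fin n) :
    hessH n Γ x y (i, 0) (j, 0) = -(hessH n Γ x y (i, 1) (j, 1)) := by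
  by_cases h : i = j <;>
    simp [hessH, h, Matrix.neg_apply, Matrix.sum_apply, hessBlock00,
      Finset.sum_neg_distrib]

lemma hessH01 (n : ℕ) (Γ x y : Fin n → ℝ) (i j : Fin n) :
    hessH n Γ x y (i, 0) (j, 1) = hessH n Γ x y (i, 1) (j, 0) := by
  by_cases h : i = j <;>
    simp [hessH, h, Matrix.neg_apply, Matrix.sum_apply, hessBlock01]

/-- The Hessian `D²H(z)` anti-commutes with `K`: `D²H(z)·K = -K·D²H(z)`. -/
theorem hessH_anticommutes_K (n : ℕ) (Γ x y : Fin n → ℝ)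
    (hz : ∀ i j : Fin n, i ≠ j → (x i, y i) ≠ (x j, y j)) :
    hessH n Γ x y * Kmat n = -(Kmat n * hessH n Γ x y) := by
  ext ⟨i, s⟩ ⟨j, t⟩
  rw [Matrix.mul_apply, Matrix.neg_apply, Matrix.mul_apply, Fintype.sum_prod_type,
    Fintype.sum_prod_type]
  have hK : ∀ (k : Fin n) (u v : Fin 2), Kmat n (k, u) (j, v) = if k = j then !![0,(1:ℝ);-1,0] u v else 0 := by
    intro k u v; rfl
  have hK2 : ∀ (k : Fin n) (u v : Fin 2), Kmat n (i, u) (k, v) = if i = k then !![0,(1:ℝ);-1,0] u v else 0 := by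
    intro k u v; rfl
  simp only [hK, hK2]
  rw [Finset.sum_eq_single j (by intro k _ hk; simp [hk]) (by simp),
    Finset.sum_eq_single i (by intro k _ hk; simp [Ne.symm hk]) (by simp)]
  simp only [if_pos rfl]
  have h00 := hessH00 n Γ x y i j
  have h01 := hessH01 n Γ x y i j
  fin_cases s <;> fin_cases t <;>
    simp [Fin.sum_univ_two, h00, h01]
end

section
/- If z is a relative equilibrium in the normalized space (c = 0, I(z) = 1), then M^{-1}D²H(z)·z = L·z; i.e., z itself is an eigenvector of M^{-1}D²H(z) with eigenvalue L. -/
/-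
The Hamiltonian is invariant under dilations up to an additive constant,
`H (t • w) = H w - L log |t|`, so `DH` is homogeneous of degree `-1` and Euler's relation along
the ray through `z` gives `D²H(z)[z, v] = -DH(z) v`. The relative-equilibrium equation turns
`-DH(z) v` into `(L/2) DI(z) v = L ∑ᵢ Γᵢ ⟪zᵢ, vᵢ⟫`.
-/

open Finset Filter Topology Function RealInnerProductSpace

theorem fderiv_smul_of_comp_smul_eventuallyEq_sub_const {𝕜 E F : Type*}
    [NontriviallyNormedField 𝕜] [NormedAddCommGroup E] [NormedSpace 𝕜 E]
    [NormedAddCommGroup F] [NormedSpace 𝕜 F] {f : E → F} {x : E} {c : 𝕜} {a : F} (hc : c ≠ 0)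
    (h : (fun y => f (c • y)) =ᶠ[𝓝 x] fun y => f y - a) :
    fderiv 𝕜 f (c • x) = c⁻¹ • fderiv 𝕜 f x := by
  have h' := h.fderiv_eq (𝕜 := 𝕜)
  rw [fderiv_comp_smul c, fderiv_sub_const a] at h'
  rw [← h', inv_smul_smul₀ hc]

section Homogeneous

variable {E F : Type*} [NormedAddCommGroup E] [NormedSpace ℝ E]
  [NormedAddCommGroup F] [NormedSpace ℝ F]

theorem fderiv_apply_self_of_homogeneous {g : E → F} {x : E} {k : ℝ}
    (hg : DifferentiableAt ℝ g x) (hhom : ∀ᶠ t in 𝓝 (1 : ℝ), g (t • x) = t ^ k • g x) :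
    fderiv ℝ g x x = k • g x := by
  have hray : HasDerivAt (fun t : ℝ => g (t • x)) (fderiv ℝ g x x) 1 :=
    hg.hasFDerivAt.comp_hasDerivAt_of_eq 1 (by simpa using (hasDerivAt_id (1 : ℝ)).smul_const x)
      (one_smul ℝ x).symm
  have hpow : HasDerivAt (fun t : ℝ => g (t • x)) (k • g x) 1 := by
    simpa using ((Real.hasDerivAt_rpow_const (p := k) (Or.inl one_ne_zero)).smul_const
      (g x)).congr_of_eventuallyEq hhom
  exact hray.unique hpow

theorem fderiv_fderiv_apply_self_of_comp_smul_eventuallyEq_sub_const {f : E → F} {x : E}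
    (hf : ContDiffAt ℝ 2 f x)
    (hscale : ∀ᶠ t in 𝓝 (1 : ℝ), ∃ a : F, (fun y => f (t • y)) =ᶠ[𝓝 x] fun y => f y - a)
    (v : E) :
    fderiv ℝ (fun w => fderiv ℝ f w v) x x = -fderiv ℝ f x v := by
  have hg : DifferentiableAt ℝ (fun w => fderiv ℝ f w v) x :=
    ((hf.fderiv_right (m := 1) le_rfl).differentiableAt one_ne_zero).clm_apply
      (differentiableAt_const v)
  have hhom : ∀ᶠ t in 𝓝 (1 : ℝ), fderiv ℝ f (t • x) v = t ^ (-1 : ℝ) • fderiv ℝ f x v := by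
    filter_upwards [hscale, eventually_ne_nhds one_ne_zero] with t ⟨a, ha⟩ ht
    rw [fderiv_smul_of_comp_smul_eventuallyEq_sub_const ht ha, Real.rpow_neg_one]
    rfl
  simpa using fderiv_apply_self_of_homogeneous hg hhom

end Homogeneous

theorem isOpen_setOf_injective {ι X : Type*} [Finite ι] [TopologicalSpace X] [T2Space X] :
    IsOpen {w : ι → X | Injective w} := by
  have : {w : ι → X | Injective w} = ⋂ i, ⋂ j, ⋂ (_ : i ≠ j), {w | w i ≠ w j} := by
    ext w
    simp only [Set.mem_ofPred_eq, Set.mem_iInter, Injective]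
    exact forall₂_congr fun i j => not_imp_not.symm
  rw [this]
  exact isOpen_iInter_of_finite fun i => isOpen_iInter_of_finite fun j =>
    isOpen_iInter_of_finite fun _ => isOpen_ne_fun (continuous_apply i) (continuous_apply j)

section Vortex

variable {ι E : Type*} [Fintype ι] [NormedAddCommGroup E] [InnerProductSpace ℝ E]

theorem fderiv_sum_mul_norm_sq_apply (Γ : ι → ℝ) (w v : ι → E) :
    fderiv ℝ (fun w : ι → E => ∑ i, Γ i * ‖w i‖ ^ 2) w v = 2 * ∑ i, Γ i * ⟪w i, v i⟫ := by
  have hsum : HasFDerivAt (fun w : ι → E => ∑ i, Γ i * ‖w i‖ ^ 2)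
      (∑ i, Γ i • (2 • (innerSL ℝ (w i)).comp (ContinuousLinearMap.proj i))) w :=
    HasFDerivAt.fun_sum fun i _ =>
      ((ContinuousLinearMap.proj (R := ℝ) (φ := fun _ : ι => E) i).hasFDerivAt).norm_sq.const_mul
        (Γ i)
  rw [hsum.fderiv, mul_sum]
  simp [mul_left_comm]

variable [LinearOrder ι]

noncomputable def vortexHamiltonian (Γ : ι → ℝ) (w : ι → E) : ℝ :=
  -∑ i, ∑ j ∈ univ.filter (fun j => i < j), Γ i * Γ j * Real.log ‖w i - w j‖

theorem contDiffAt_vortexHamiltonian {n : WithTop ℕ∞} (Γ : ι → ℝ) {w : ι → E}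
    (hw : Injective w) : ContDiffAt ℝ n (vortexHamiltonian Γ) w := by
  refine (ContDiffAt.sum fun i _ => ContDiffAt.sum fun j hj => ?_).neg
  have hne : w i - w j ≠ 0 := sub_ne_zero.mpr (hw.ne (mem_filter.mp hj).2.ne)
  refine contDiffAt_const.mul (ContDiffAt.log ?_ (norm_ne_zero_iff.mpr hne))
  exact (contDiffAt_norm ℝ hne).comp w ((contDiffAt_apply ℝ E i w).sub (contDiffAt_apply ℝ E j w))

theorem vortexHamiltonian_smul (Γ : ι → ℝ) {w : ι → E} (hw : Injective w) {t : ℝ} (ht : t ≠ 0) :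
    vortexHamiltonian Γ (t • w) = vortexHamiltonian Γ w
      - (∑ i, ∑ j ∈ univ.filter (fun j => i < j), Γ i * Γ j) * Real.log |t| := by
  simp only [vortexHamiltonian, Pi.smul_apply, ← smul_sub, norm_smul, Real.norm_eq_abs,
    sum_mul, ← sum_neg_distrib, ← sum_sub_distrib]
  refine sum_congr rfl fun i _ => sum_congr rfl fun j hj => ?_
  have hne : ‖w i - w j‖ ≠ 0 :=
    norm_ne_zero_iff.mpr (sub_ne_zero.mpr (hw.ne (mem_filter.mp hj).2.ne))
  rw [Real.log_mul (abs_ne_zero.mpr ht) hne]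
  ring

theorem vortexHamiltonian_comp_smul_eventuallyEq (Γ : ι → ℝ) {w : ι → E} (hw : Injective w)
    {t : ℝ} (ht : t ≠ 0) :
    (fun y => vortexHamiltonian Γ (t • y)) =ᶠ[𝓝 w] fun y => vortexHamiltonian Γ y
      - (∑ i, ∑ j ∈ univ.filter (fun j => i < j), Γ i * Γ j) * Real.log |t| := by
  filter_upwards [isOpen_setOf_injective.mem_nhds hw] with y hy
  exact vortexHamiltonian_smul Γ hy ht

end Vortex

theorem modified_hessian_eigenvector_z_general (n : ℕ) (Γ : Fin n → ℝ)
    (z : Fin n → EuclideanSpace ℝ (Fin 2)) (hz : ∀ i j, i ≠ j → z i ≠ z j)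
    (L : ℝ)
    (H : (Fin n → EuclideanSpace ℝ (Fin 2)) → ℝ)
    (hH : H = fun w =>
      -∑ i, ∑ j ∈ Finset.univ.filter (fun j => i < j),
        Γ i * Γ j * Real.log ‖w i - w j‖)
    (I : (Fin n → EuclideanSpace ℝ (Fin 2)) → ℝ)
    (hI : I = fun w => ∑ i, Γ i * ‖w i‖ ^ 2)
    (hRE : ∀ v, fderiv ℝ H z v + (L / 2) * fderiv ℝ I z v = 0) :
    ∀ v : Fin n → EuclideanSpace ℝ (Fin 2),
      fderiv ℝ (fun w => fderiv ℝ H w v) z z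
        = L * ∑ i, Γ i * (inner ℝ (z i) (v i) : ℝ) := by
  intro v
  have hzinj : Injective z := fun i j hij => by_contra fun hne => hz i j hne hij
  replace hH : H = vortexHamiltonian Γ := hH
  subst hH hI
  have hscale : ∀ᶠ t in 𝓝 (1 : ℝ), ∃ a : ℝ,
      (fun w => vortexHamiltonian Γ (t • w)) =ᶠ[𝓝 z] fun w => vortexHamiltonian Γ w - a :=
    (eventually_ne_nhds one_ne_zero).mono fun t ht =>
      ⟨_, vortexHamiltonian_comp_smul_eventuallyEq Γ hzinj ht⟩
  rw [fderiv_fderiv_apply_self_of_comp_smul_eventuallyEq_sub_const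
    (contDiffAt_vortexHamiltonian Γ hzinj) hscale v]
  have hre := hRE v
  rw [fderiv_sum_mul_norm_sq_apply] at hre
  linear_combination -hre

/-- If `z` is a relative equilibrium in the normalized space (`c = 0`, `I(z) = 1`) with
positive circulations, then `M⁻¹ D²H(z) z = L z`, i.e. `z` is an eigenvector of
`M⁻¹ D²H(z)` with eigenvalue `L`.  Equivalently, for every direction `v`,
`D²H(z)[z, v] = L ⟨Mz, v⟩ = L ∑ᵢ Γᵢ ⟨zᵢ, vᵢ⟩`. -/
theorem modified_hessian_eigenvector_z (n : ℕ) (Γ : Fin n → ℝ) (hΓ : ∀ i, 0 < Γ i)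
    (z : Fin n → EuclideanSpace ℝ (Fin 2)) (hz : ∀ i j, i ≠ j → z i ≠ z j)
    (L : ℝ)
    (hL : L = ∑ i, ∑ j ∈ Finset.univ.filter (fun j => i < j), Γ i * Γ j)
    (hc : ∑ i, Γ i • z i = 0)
    (hnorm : ∑ i, Γ i * ‖z i‖ ^ 2 = 1)
    (H : (Fin n → EuclideanSpace ℝ (Fin 2)) → ℝ)
    (hH : H = fun w =>
      -∑ i, ∑ j ∈ Finset.univ.filter (fun j => i < j),
        Γ i * Γ j * Real.log ‖w i - w j‖)
    (I : (Fin n → EuclideanSpace ℝ (Fin 2)) → ℝ)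
    (hI : I = fun w => ∑ i, Γ i * ‖w i‖ ^ 2)
    (hRE : ∀ v, fderiv ℝ H z v + (L / 2) * fderiv ℝ I z v = 0) :
    ∀ v : Fin n → EuclideanSpace ℝ (Fin 2),
      fderiv ℝ (fun w => fderiv ℝ H w v) z z
        = L * ∑ i, Γ i * (inner ℝ (z i) (v i) : ℝ) :=
  modified_hessian_eigenvector_z_general n Γ z hz L H hH I hI hRE
end

section
/- Let z be a relative equilibrium with Γ_i > 0 and L > 0. If ν is an eigenvalue of the modified Hessian M^{-1}D²G(z) = M^{-1}D²H(z) + L·Id with eigenvector v, then 2L - ν is an eigenvalue of M^{-1}D²G(z) with eigenvector Kv, and μ = ν - L is an eigenvalue of M^{-1}D²H(z) with eigenvector v. -/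
open Finset

lemma Kmat_sq (n : ℕ) : Kmat n * Kmat n = -1 := by
  ext ⟨i, a⟩ ⟨j, b⟩
  simp only [Matrix.mul_apply, Kmat, Fintype.sum_prod_type]
  rw [Finset.sum_eq_single i]
  · by_cases h : i = j
    · subst h
      simp only [if_true, Matrix.neg_apply, Matrix.one_apply, Prod.mk.injEq,
        Fin.sum_univ_two]
      fin_cases a <;> fin_cases b <;> norm_num [Matrix.one_apply]
    · simp [h, Matrix.neg_apply, Matrix.one_apply, Prod.ext_iff]
  · intro c _ hc
    simp [Ne.symm hc]
  · simp

lemma Kmat_comm_diag (n : ℕ) (d : Fin n → ℝ) :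
    Matrix.diagonal (fun p : Fin n × Fin 2 => d p.1) * Kmat n
      = Kmat n * Matrix.diagonal (fun p : Fin n × Fin 2 => d p.1) := by
  ext p q
  rw [Matrix.diagonal_mul, Matrix.mul_diagonal]
  by_cases h : p.1 = q.1
  · simp [Kmat, h, mul_comm]
  · simp [Kmat, h]

/-- Let `z` be a relative equilibrium with positive circulations and `L > 0`, and let
`Hm = D²H(z)` (which anti-commutes with `K`) and `M = diag(Γ₁,Γ₁,…,Γ_n,Γ_n)`.
If `ν` is an eigenvalue of the modified Hessian `M⁻¹ Hm + L·Id` with eigenvector `v`,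
then `2L - ν` is an eigenvalue of the modified Hessian with eigenvector `Kv`,
and `μ = ν - L` is an eigenvalue of `M⁻¹ Hm` with eigenvector `v`. -/
theorem modified_hessian_eigenvalue_pairs (n : ℕ) (Γ : Fin n → ℝ) (hΓ : ∀ i, 0 < Γ i)
    (L : ℝ) (hLpos : 0 < L)
    (hL : L = ∑ i, ∑ j ∈ Finset.univ.filter (fun j => i < j), Γ i * Γ j)
    (Hm : Matrix (Fin n × Fin 2) (Fin n × Fin 2) ℝ)
    (hHK : Hm * Kmat n = -(Kmat n * Hm))
    (M : Matrix (Fin n × Fin 2) (Fin n × Fin 2) ℝ)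
    (hM : M = Matrix.diagonal (fun p => Γ p.1))
    (ν : ℝ) (v : Fin n × Fin 2 → ℝ) (hv : v ≠ 0)
    (heig : (M⁻¹ * Hm + L • (1 : Matrix (Fin n × Fin 2) (Fin n × Fin 2) ℝ)).mulVec v
      = ν • v) :
    (Kmat n).mulVec v ≠ 0 ∧
      (M⁻¹ * Hm + L • (1 : Matrix (Fin n × Fin 2) (Fin n × Fin 2) ℝ)).mulVec
          ((Kmat n).mulVec v) = (2 * L - ν) • (Kmat n).mulVec v ∧
      (M⁻¹ * Hm).mulVec v = (ν - L) • v := by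
  have hMinv : M⁻¹ = Matrix.diagonal (fun p : Fin n × Fin 2 => (Γ p.1)⁻¹) := by
    apply Matrix.inv_eq_right_inv
    rw [hM, Matrix.diagonal_mul_diagonal]
    have h1 : (fun p : Fin n × Fin 2 => Γ p.1 * (Γ p.1)⁻¹) = fun _ => (1 : ℝ) :=
      funext fun p => mul_inv_cancel₀ (hΓ p.1).ne'
    rw [h1, Matrix.diagonal_one]
  have hcomm : M⁻¹ * Kmat n = Kmat n * M⁻¹ := by
    rw [hMinv]; exact Kmat_comm_diag n (fun i => (Γ i)⁻¹)
  -- third claim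
  have h3 : (M⁻¹ * Hm).mulVec v = (ν - L) • v := by
    have := heig
    rw [Matrix.add_mulVec, Matrix.smul_mulVec, Matrix.one_mulVec] at this
    have : (M⁻¹ * Hm).mulVec v = ν • v - L • v := by
      rw [← this]; abel
    rw [this, ← sub_smul]
  have hKK : (Kmat n).mulVec ((Kmat n).mulVec v) = -v := by
    rw [Matrix.mulVec_mulVec, Kmat_sq, Matrix.neg_mulVec, Matrix.one_mulVec]
  have hKv : (Kmat n).mulVec v ≠ 0 := by
    intro h
    apply hv
    have : (Kmat n).mulVec ((Kmat n).mulVec v) = 0 := by rw [h, Matrix.mulVec_zero]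
    rw [hKK] at this
    simpa using congrArg Neg.neg this
  refine ⟨hKv, ?_, h3⟩
  have key : M⁻¹ * Hm * Kmat n = -(Kmat n * (M⁻¹ * Hm)) := by
    rw [Matrix.mul_assoc, hHK, Matrix.mul_neg, ← Matrix.mul_assoc, hcomm,
      Matrix.mul_assoc]
  calc (M⁻¹ * Hm + L • (1 : Matrix (Fin n × Fin 2) (Fin n × Fin 2) ℝ)).mulVec
        ((Kmat n).mulVec v)
      = (M⁻¹ * Hm).mulVec ((Kmat n).mulVec v) + L • (Kmat n).mulVec v := by
        rw [Matrix.add_mulVec, Matrix.smul_mulVec, Matrix.one_mulVec]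
    _ = (M⁻¹ * Hm * Kmat n).mulVec v + L • (Kmat n).mulVec v := by
        rw [Matrix.mulVec_mulVec]
    _ = -((Kmat n).mulVec ((M⁻¹ * Hm).mulVec v)) + L • (Kmat n).mulVec v := by
        rw [key, Matrix.neg_mulVec, Matrix.mulVec_mulVec]
    _ = -((ν - L) • (Kmat n).mulVec v) + L • (Kmat n).mulVec v := by
        rw [h3, Matrix.mulVec_smul]
    _ = (2 * L - ν) • (Kmat n).mulVec v := by
        rw [← neg_smul, ← add_smul]; ring_nf
end

section
/- Let R(μ) = μ²(μ² - ω²)(μ² - μ₁²)(μ² - μ₂²) = μ⁸ + c₆μ⁶ + c₄μ⁴ + c₂μ² be the characteristic polynomial of the matrix M^{-1}D²H(z) for a four-vortex relative equilibrium. Then c₄ + 2ω²c₆ + 3ω⁴ = (μ₁² - ω²)(μ₂² - ω²). Consequently z is nondegenerate (i.e., ±μ_i ≠ ±ω for i = 1,2) if and only if c₄ + 2ω²c₆ + 3ω⁴ ≠ 0. -/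
/-- For a four-vortex relative equilibrium, with characteristic polynomial
`R(μ) = μ²(μ² - ω²)(μ² - μ₁²)(μ² - μ₂²) = μ⁸ + c₆μ⁶ + c₄μ⁴ + c₂μ²` of `M⁻¹D²H(z)`,
where `c₆ = -(μ₁² + μ₂² + ω²)` and `c₄ = μ₁²μ₂² + ω²(μ₁² + μ₂²)`, one has
`c₄ + 2ω²c₆ + 3ω⁴ = (μ₁² - ω²)(μ₂² - ω²)`.  Consequently `z` is nondegenerate
(i.e. `±μᵢ ≠ ±ω`, equivalently `μᵢ² ≠ ω²` for `i = 1,2`) iff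
`c₄ + 2ω²c₆ + 3ω⁴ ≠ 0`. -/
theorem nondegeneracy_criterion (ω : ℝ) (hω : ω ≠ 0) (μ₁ μ₂ : ℂ)
    (c₆ c₄ : ℂ)
    (hc₆ : c₆ = -(μ₁ ^ 2 + μ₂ ^ 2 + (ω : ℂ) ^ 2))
    (hc₄ : c₄ = μ₁ ^ 2 * μ₂ ^ 2 + (ω : ℂ) ^ 2 * (μ₁ ^ 2 + μ₂ ^ 2)) :
    c₄ + 2 * (ω : ℂ) ^ 2 * c₆ + 3 * (ω : ℂ) ^ 4
        = (μ₁ ^ 2 - (ω : ℂ) ^ 2) * (μ₂ ^ 2 - (ω : ℂ) ^ 2) ∧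
      ((μ₁ ^ 2 ≠ (ω : ℂ) ^ 2 ∧ μ₂ ^ 2 ≠ (ω : ℂ) ^ 2) ↔
        c₄ + 2 * (ω : ℂ) ^ 2 * c₆ + 3 * (ω : ℂ) ^ 4 ≠ 0) := by
  subst hc₆ hc₄
  have h : μ₁ ^ 2 * μ₂ ^ 2 + (ω : ℂ) ^ 2 * (μ₁ ^ 2 + μ₂ ^ 2) +
      2 * (ω : ℂ) ^ 2 * -(μ₁ ^ 2 + μ₂ ^ 2 + (ω : ℂ) ^ 2) + 3 * (ω : ℂ) ^ 4
      = (μ₁ ^ 2 - (ω : ℂ) ^ 2) * (μ₂ ^ 2 - (ω : ℂ) ^ 2) := by ring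
  refine ⟨h, ?_⟩
  rw [h]
  constructor
  · rintro ⟨h1, h2⟩
    exact mul_ne_zero (sub_ne_zero.mpr h1) (sub_ne_zero.mpr h2)
  · intro hne
    exact ⟨sub_ne_zero.mp (left_ne_zero_of_mul hne),
      sub_ne_zero.mp (right_ne_zero_of_mul hne)⟩
end

section
/- For m ∈ (0,1), the quadratic equation ρ²(m+2) + ρ(2m² - 2m - 6) + 2m² + m = 0 has two distinct real positive roots, given by ρ = (-m² + m + 3 ± √((m²-1)(m²-4m-9)))/(m+2). -/
/-!
With `a = m + 2`, `p = -m² + m + 3`, `c = 2m² + m` the equation reads `a ρ² - 2 p ρ + c = 0`,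
whose reduced discriminant `p² - a c` is exactly `(m² - 1)(m² - 4m - 9)`, a product of two
negative factors for `0 < m < 1`. The roots `(p ± √(p² - a c)) / a` are then distinct, and both
are positive because `a, c, p > 0` force `√(p² - a c) < p`.
-/

section Quadratic

variable {K : Type*} [Field K] {a p c s : K}

theorem quadratic_eq_zero_iff_of_mul_self_eq (ha : a ≠ 0) (hs : s * s = p ^ 2 - a * c) (x : K) :
    a * x ^ 2 - 2 * p * x + c = 0 ↔ x = (p + s) / a ∨ x = (p - s) / a := by
  have hfactor : a * (a * x ^ 2 - 2 * p * x + c) = (a * x - (p + s)) * (a * x - (p - s)) := by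
    linear_combination hs
  rw [← mul_right_inj' ha, mul_zero, hfactor, mul_eq_zero, sub_eq_zero, sub_eq_zero,
    eq_div_iff ha, eq_div_iff ha, mul_comm x a]

variable [LinearOrder K] [IsStrictOrderedRing K]

theorem quadratic_roots_lt (ha : 0 < a) (hs : 0 < s) : (p - s) / a < (p + s) / a :=
  div_lt_div_of_pos_right (by linarith) ha

theorem quadratic_roots_pos (ha : 0 < a) (hc : 0 < c) (hp : 0 < p) (hs0 : 0 ≤ s)
    (hs : s * s = p ^ 2 - a * c) : 0 < (p + s) / a ∧ 0 < (p - s) / a := by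
  have hsp : s < p := by nlinarith [mul_pos ha hc]
  exact ⟨div_pos (by linarith) ha, div_pos (by linarith) ha⟩

end Quadratic

/-- For `m ∈ (0,1)`, the quadratic `ρ²(m+2) + ρ(2m² - 2m - 6) + 2m² + m = 0` has two
distinct real positive roots, given by
`ρ = (-m² + m + 3 ± √((m²-1)(m²-4m-9)))/(m+2)`. -/
theorem kite_quadratic_roots (m : ℝ) (hm0 : 0 < m) (hm1 : m < 1) :
    let d := (m ^ 2 - 1) * (m ^ 2 - 4 * m - 9)
    let ρp := (-m ^ 2 + m + 3 + Real.sqrt d) / (m + 2)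
    let ρm := (-m ^ 2 + m + 3 - Real.sqrt d) / (m + 2)
    ρp ≠ ρm ∧ 0 < ρp ∧ 0 < ρm ∧
      ρp ^ 2 * (m + 2) + ρp * (2 * m ^ 2 - 2 * m - 6) + 2 * m ^ 2 + m = 0 ∧
      ρm ^ 2 * (m + 2) + ρm * (2 * m ^ 2 - 2 * m - 6) + 2 * m ^ 2 + m = 0 ∧
      ∀ ρ : ℝ, ρ ^ 2 * (m + 2) + ρ * (2 * m ^ 2 - 2 * m - 6) + 2 * m ^ 2 + m = 0 →
        ρ = ρp ∨ ρ = ρm := by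
  intro d ρp ρm
  have hd : 0 < d := mul_pos_of_neg_of_neg (by nlinarith) (by nlinarith)
  have ha : 0 < m + 2 := by linarith
  have hs : √d * √d = (-m ^ 2 + m + 3) ^ 2 - (m + 2) * (2 * m ^ 2 + m) := by
    rw [Real.mul_self_sqrt hd.le]; ring
  have hform (ρ : ℝ) : ρ ^ 2 * (m + 2) + ρ * (2 * m ^ 2 - 2 * m - 6) + 2 * m ^ 2 + m =
      (m + 2) * ρ ^ 2 - 2 * (-m ^ 2 + m + 3) * ρ + (2 * m ^ 2 + m) := by ring
  have hroots := quadratic_eq_zero_iff_of_mul_self_eq ha.ne' hs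
  obtain ⟨hρp, hρm⟩ := quadratic_roots_pos ha (by positivity) (by nlinarith) (Real.sqrt_nonneg d) hs
  refine ⟨(quadratic_roots_lt ha (Real.sqrt_pos.2 hd)).ne', hρp, hρm, ?_, ?_, fun ρ hρ => ?_⟩
  · exact (hform ρp).trans ((hroots ρp).2 (Or.inl rfl))
  · exact (hform ρm).trans ((hroots ρm).2 (Or.inr rfl))
  · rwa [hform, hroots] at hρ
end

section
/- With the asymmetric-family coordinates (z₁ = (1,0), z₂ = (-1,0), z₃, z₄ as in the explicit formulas for m ∈ (0,1)), the quantity x₄y₃ - x₃y₄ + y₄ - y₃ equals √(3(m+1))·(√(3m+5) - √(m+1)), which is positive; hence the x-intercept of the line through z₃ and z₄ exceeds 1 and the configuration is concave with vortex 1 interior. -/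
/-- For `0 < m < 1`, with the asymmetric-family coordinates, the quantity
`x₄y₃ - x₃y₄ + y₄ - y₃` equals `√(3(m+1))(√(3m+5) - √(m+1))`, which is positive;
hence the `x`-intercept `(x₄y₃ - x₃y₄)/(y₃ - y₄)` of the line through `z₃` and `z₄`
exceeds `1`, so the configuration is concave with vortex 1 interior. -/
theorem asymmetric_concave (m : ℝ) (hm0 : 0 < m) (hm1 : m < 1) :
    let x₃ := (1 / 2) * Real.sqrt (3 * m + 5) * (Real.sqrt (m + 1) - Real.sqrt (1 - m))
    let y₃ := (Real.sqrt 3 / 2) * (m + 1 + Real.sqrt (1 - m ^ 2))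
    let x₄ := (1 / 2) * Real.sqrt (3 * m + 5) * (Real.sqrt (m + 1) + Real.sqrt (1 - m))
    let y₄ := -(Real.sqrt 3 / 2) * (m + 1 - Real.sqrt (1 - m ^ 2))
    x₄ * y₃ - x₃ * y₄ + y₄ - y₃
        = Real.sqrt (3 * (m + 1)) * (Real.sqrt (3 * m + 5) - Real.sqrt (m + 1)) ∧
      0 < x₄ * y₃ - x₃ * y₄ + y₄ - y₃ ∧
      1 < (x₄ * y₃ - x₃ * y₄) / (y₃ - y₄) := by
  intro x₃ y₃ x₄ y₄
  set a := Real.sqrt (m + 1) with ha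
  set b := Real.sqrt (1 - m) with hb
  set s := Real.sqrt (3 * m + 5) with hs
  set t := Real.sqrt 3 with ht
  have ha2 : a ^ 2 = m + 1 := Real.sq_sqrt (by linarith)
  have hb2 : b ^ 2 = 1 - m := Real.sq_sqrt (by linarith)
  have hs2 : s ^ 2 = 3 * m + 5 := Real.sq_sqrt (by linarith)
  have ht2 : t ^ 2 = 3 := Real.sq_sqrt (by norm_num)
  have hapos : 0 < a := Real.sqrt_pos.mpr (by linarith)
  have hbpos : 0 < b := Real.sqrt_pos.mpr (by linarith)
  have hspos : 0 < s := Real.sqrt_pos.mpr (by linarith)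
  have htpos : 0 < t := Real.sqrt_pos.mpr (by norm_num)
  have hab : Real.sqrt (1 - m ^ 2) = a * b := by
    rw [ha, hb, ← Real.sqrt_mul (by linarith)]
    ring_nf
  have h3 : Real.sqrt (3 * (m + 1)) = t * a := by
    rw [ht, ha, ← Real.sqrt_mul (by norm_num)]
  have has : a < s := Real.sqrt_lt_sqrt (by linarith) (by linarith)
  have hx4y3 : x₄ * y₃ - x₃ * y₄ = s * t * a := by
    show (1 / 2) * s * (a + b) * ((t / 2) * (m + 1 + Real.sqrt (1 - m ^ 2)))
        - (1 / 2) * s * (a - b) * (-(t / 2) * (m + 1 - Real.sqrt (1 - m ^ 2))) = s * t * a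
    rw [hab]
    linear_combination (s * t * a / 2) * hb2
  have hy : y₃ - y₄ = t * a ^ 2 := by
    show (t / 2) * (m + 1 + Real.sqrt (1 - m ^ 2)) - (-(t / 2) * (m + 1 - Real.sqrt (1 - m ^ 2)))
        = t * a ^ 2
    linear_combination -t * ha2
  have hE : x₄ * y₃ - x₃ * y₄ + y₄ - y₃ = t * a * (s - a) := by
    have : x₄ * y₃ - x₃ * y₄ + y₄ - y₃ = (x₄ * y₃ - x₃ * y₄) - (y₃ - y₄) := by ring
    rw [this, hx4y3, hy]; ring
  refine ⟨by rw [hE, h3], ?_, ?_⟩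
  · rw [hE]
    have hsa : 0 < s - a := by linarith
    positivity
  · rw [hx4y3, hy, lt_div_iff₀ (by positivity)]
    nlinarith [mul_pos htpos hapos]
end
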